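/- If a finitely right generated cell space R with finite stabiliser G₀ has sub-exponential growth (equivalently its S-growth rate λ_S equals 1 for a finite symmetric right generating set S), then for every ε > 0 there is a non-empty finite subset F ⊆ M such that for every s ∈ S, |F \ (· ⊲ s)^{-1}(F)| / |F| < ε; in fact some ball B_S(k) works as F. -/

import Mathlib

open MulAction Pointwise Filter

/-- A cell space: a transitive left `G`-set `M` with a choice of base point `m0`
and coordinates `coord m` satisfying `coord m • m0 = m`. -/
structure CellSpace (G M : Type*) [Group G] [MulAction G M] where
  m0 : M
  coord : M → G
  coord_spec : ∀ m : M, coord m • m0 = m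

namespace CellSpace

variable {G M : Type*} [Group G] [MulAction G M] (R : CellSpace G M)

/-- The stabiliser `G₀` of the base point. -/
def G0 : Subgroup G := MulAction.stabilizer G R.m0

/-- The induced right quotient-set semi-action `m ⊲ gG₀ = (coord m * g) • m₀`. -/
def rsa (m : M) (q : G ⧸ R.G0) : M :=
  Quotient.liftOn' q (fun g => (R.coord m * g) • R.m0) (by
    intro a b h
    have hab : a⁻¹ * b ∈ R.G0 := QuotientGroup.leftRel_apply.mp h
    have hm : (a⁻¹ * b) • R.m0 = R.m0 := hab
    have hba : b • R.m0 = a • R.m0 := by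
      calc b • R.m0 = a • (a⁻¹ * b) • R.m0 := by rw [← mul_smul]; group
        _ = a • R.m0 := by rw [hm]
    simp only [mul_smul, hba])

/-- `S⁻¹ = {g⁻¹G₀ : s ∈ S, g ∈ s}`. -/
def sinv (S : Set (G ⧸ R.G0)) : Set (G ⧸ R.G0) :=
  {x | ∃ g : G, ((g : G ⧸ R.G0) ∈ S) ∧ x = ((g⁻¹ : G) : G ⧸ R.G0)}

/-- Iterated application of the right semi-action along a word. -/
def apply (m : M) (l : List (G ⧸ R.G0)) : M := l.foldl R.rsa m

/-- `S` right generates `R`: every point is reachable from `m₀` by a word over `S ∪ S⁻¹`. -/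
def RightGenerates (S : Set (G ⧸ R.G0)) : Prop :=
  ∀ m : M, ∃ l : List (G ⧸ R.G0), (∀ s ∈ l, s ∈ S ∪ R.sinv S) ∧ R.apply R.m0 l = m

/-- `G₀ · S ⊆ S`. -/
def Saturated (S : Set (G ⧸ R.G0)) : Prop :=
  ∀ g₀ ∈ R.G0, ∀ s ∈ S, g₀ • s ∈ S

/-- `S` is symmetric: `S⁻¹ ⊆ S`. -/
def Symm (S : Set (G ⧸ R.G0)) : Prop := R.sinv S ⊆ S

/-- The `S`-metric: the least length of a word over `S` taking `m` to `m'`. -/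
noncomputable def dist (S : Set (G ⧸ R.G0)) (m m' : M) : ℕ :=
  sInf {k | ∃ l : List (G ⧸ R.G0), l.length = k ∧ (∀ s ∈ l, s ∈ S) ∧ R.apply m l = m'}

/-- The ball of radius `ρ` centred at `m` in the `S`-metric. -/
def ball (S : Set (G ⧸ R.G0)) (m : M) (ρ : ℕ) : Set M :=
  {m' | R.dist S m m' ≤ ρ}

/-- The sphere of radius `ρ` centred at `m` in the `S`-metric. -/
def sphere (S : Set (G ⧸ R.G0)) (m : M) (ρ : ℕ) : Set M :=
  {m' | R.dist S m m' = ρ}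

/-- The semi-action of `M` on itself under the identification `m ↦ G_{m₀,m}`. -/
noncomputable def rsaM (m m' : M) : M := R.rsa m ((R.coord m' : G) : G ⧸ R.G0)

end CellSpace


/-!
If `γ(k + 1) ≥ (1 + ε) γ(k)` for every `k`, then `γ(k) ≥ (1 + ε)ᵏ` and `λ_S ≥ 1 + ε`; so
sub-exponential growth gives some `k` with `γ(k + 1) < (1 + ε) γ(k)`. Since one step of `· ⊲ s`
raises the distance to `m₀` by at most one, every point of `F = B_S(k + 1)` that `· ⊲ s` moves out
of `F` lies outside `B_S(k)`, whence `|F \ (· ⊲ s)⁻¹(F)| ≤ γ(k + 1) - γ(k) < ε γ(k + 1)`.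
-/

theorem exists_succ_lt_one_add_mul_of_tendsto_rpow_one {a : ℕ → ℕ} (h0 : 0 < a 0)
    (ha : Tendsto (fun k : ℕ => (a k : ℝ) ^ ((1 : ℝ) / k)) atTop (nhds 1))
    {ε : ℝ} (hε : 0 < ε) : ∃ k, (a (k + 1) : ℝ) < (1 + ε) * a k := by
  by_contra! hgrow
  have hpow : ∀ k, (1 + ε) ^ k ≤ (a k : ℝ) := by
    intro k
    induction k with
    | zero => rw [pow_zero]; exact_mod_cast h0
    | succ k ih =>
      calc (1 + ε) ^ (k + 1) = (1 + ε) * (1 + ε) ^ k := pow_succ' _ _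
        _ ≤ (1 + ε) * a k := by gcongr
        _ ≤ a (k + 1) := hgrow k
  have hroot : ∀ᶠ k : ℕ in atTop, 1 + ε ≤ (a k : ℝ) ^ ((1 : ℝ) / k) := by
    filter_upwards [eventually_ne_atTop 0] with k hk
    calc 1 + ε = ((1 + ε) ^ k) ^ ((1 : ℝ) / k) := by
          rw [← Real.rpow_natCast, ← Real.rpow_mul (by positivity), mul_one_div_cancel
            (Nat.cast_ne_zero.mpr hk), Real.rpow_one]
      _ ≤ (a k : ℝ) ^ ((1 : ℝ) / k) := by gcongr; exact hpow k
  linarith [ge_of_tendsto ha hroot]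

theorem Set.ncard_div_lt_of_subset_sdiff {α : Type*} {A B D : Set α} {ε : ℝ}
    (hB : B.Finite) (hAB : A ⊆ B) (hD : D ⊆ B \ A)
    (hlt : (B.ncard : ℝ) < (1 + ε) * A.ncard) : (D.ncard : ℝ) / B.ncard < ε := by
  have hDle : (D.ncard : ℝ) ≤ B.ncard - A.ncard := by
    rw [← Nat.cast_sub (Set.ncard_le_ncard hAB hB), ← Set.ncard_sdiff hAB (hB.subset hAB)]
    exact_mod_cast Set.ncard_le_ncard hD hB.sdiff
  have hAB' : (A.ncard : ℝ) ≤ B.ncard := by exact_mod_cast Set.ncard_le_ncard hAB hB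
  have hεA : 0 < ε * A.ncard := by linarith
  have hε : 0 < ε := pos_of_mul_pos_left hεA (Nat.cast_nonneg _)
  have hA : (0 : ℝ) < A.ncard := pos_of_mul_pos_right hεA hε.le
  rw [div_lt_iff₀ (hA.trans_le hAB')]
  linarith [mul_le_mul_of_nonneg_left hAB' hε.le]

namespace CellSpace

variable {G M : Type*} [Group G] [MulAction G M] {R : CellSpace G M} {S : Set (G ⧸ R.G0)}

theorem apply_append (m : M) (l l' : List (G ⧸ R.G0)) :
    R.apply m (l ++ l') = R.apply (R.apply m l) l' :=
  List.foldl_append ..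

theorem dist_le_length (m : M) {l : List (G ⧸ R.G0)} (hl : ∀ s ∈ l, s ∈ S) :
    R.dist S m (R.apply m l) ≤ l.length :=
  Nat.sInf_le ⟨l, rfl, hl, rfl⟩

theorem dist_self (m : M) : R.dist S m m = 0 :=
  Nat.le_zero.mp (dist_le_length m (l := []) (by simp))

theorem mem_ball_self (m : M) (ρ : ℕ) : m ∈ R.ball S m ρ :=
  (CellSpace.dist_self m).trans_le (Nat.zero_le ρ)

theorem ball_mono {m : M} {ρ ρ' : ℕ} (h : ρ ≤ ρ') : R.ball S m ρ ⊆ R.ball S m ρ' :=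
  fun _ hm => le_trans hm h

theorem exists_word_eq_apply_of_rightGenerates (hsym : R.Symm S) (hgen : R.RightGenerates S)
    (m : M) : ∃ l : List (G ⧸ R.G0), (∀ s ∈ l, s ∈ S) ∧ R.apply R.m0 l = m := by
  obtain ⟨l, hl, happ⟩ := hgen m
  exact ⟨l, fun s hs => (hl s hs).elim id (hsym ·), happ⟩

theorem exists_word_length_eq_dist (hsym : R.Symm S) (hgen : R.RightGenerates S) (m : M) :
    ∃ l : List (G ⧸ R.G0), l.length = R.dist S R.m0 m ∧ (∀ s ∈ l, s ∈ S) ∧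
      R.apply R.m0 l = m :=
  have ⟨l, hl, happ⟩ := exists_word_eq_apply_of_rightGenerates hsym hgen m
  Nat.sInf_mem (s := {k | ∃ l : List (G ⧸ R.G0), l.length = k ∧ (∀ s ∈ l, s ∈ S) ∧
    R.apply R.m0 l = m}) ⟨l.length, l, rfl, hl, happ⟩

theorem dist_rsa_le (hsym : R.Symm S) (hgen : R.RightGenerates S) (m : M)
    {s : G ⧸ R.G0} (hs : s ∈ S) : R.dist S R.m0 (R.rsa m s) ≤ R.dist S R.m0 m + 1 := by
  obtain ⟨l, hlen, hl, rfl⟩ := exists_word_length_eq_dist hsym hgen m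
  have hword : R.apply R.m0 (l ++ [s]) = R.rsa (R.apply R.m0 l) s := by
    rw [apply_append]; rfl
  calc R.dist S R.m0 (R.rsa (R.apply R.m0 l) s) ≤ (l ++ [s]).length := by
        rw [← hword]
        refine dist_le_length R.m0 fun t ht => ?_
        rcases List.mem_append.mp ht with ht | ht
        exacts [hl t ht, List.mem_singleton.mp ht ▸ hs]
    _ = R.dist S R.m0 (R.apply R.m0 l) + 1 := by simp [hlen]

theorem ball_succ_subset (hsym : R.Symm S) (hgen : R.RightGenerates S) (ρ : ℕ) :
    R.ball S R.m0 (ρ + 1) ⊆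
      R.ball S R.m0 ρ ∪ ⋃ s ∈ S, (fun m => R.rsa m s) '' R.ball S R.m0 ρ := by
  intro m hm
  obtain ⟨l, hlen, hl, rfl⟩ := exists_word_length_eq_dist hsym hgen m
  rcases List.eq_nil_or_concat l with rfl | ⟨l', s, rfl⟩
  · exact Or.inl (mem_ball_self _ ρ)
  · simp only [List.concat_eq_append, List.mem_append, List.mem_singleton] at hl
    have hl' : R.apply R.m0 l' ∈ R.ball S R.m0 ρ := by
      refine (dist_le_length R.m0 fun t ht => hl t (Or.inl ht)).trans ?_
      have : (l'.concat s).length ≤ ρ + 1 := hlen ▸ hm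
      simpa using this
    refine Or.inr (Set.mem_biUnion (hl s (Or.inr rfl)) ⟨_, hl', ?_⟩)
    rw [List.concat_eq_append, apply_append]; rfl

theorem ball_finite (hS : S.Finite) (hsym : R.Symm S) (hgen : R.RightGenerates S) (ρ : ℕ) :
    (R.ball S R.m0 ρ).Finite := by
  induction ρ with
  | zero =>
    refine (Set.finite_singleton R.m0).subset fun m hm => ?_
    obtain ⟨l, hlen, -, rfl⟩ := exists_word_length_eq_dist hsym hgen m
    rw [List.length_eq_zero_iff.mp (hlen.trans (Nat.le_zero.mp hm))]
    rfl
  | succ ρ ih =>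
    exact (ih.union (hS.biUnion fun s _ => ih.image _)).subset (ball_succ_subset hsym hgen ρ)

theorem ball_sdiff_preimage_subset (hsym : R.Symm S) (hgen : R.RightGenerates S) (k : ℕ)
    {s : G ⧸ R.G0} (hs : s ∈ S) :
    R.ball S R.m0 (k + 1) \ (fun m => R.rsa m s) ⁻¹' R.ball S R.m0 (k + 1) ⊆
      R.ball S R.m0 (k + 1) \ R.ball S R.m0 k :=
  fun m ⟨hm, hms⟩ => ⟨hm, fun hmk => hms <| (dist_rsa_le hsym hgen m hs).trans
    (Nat.succ_le_succ hmk)⟩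

end CellSpace

theorem stmt19_general {G M : Type*} [Group G] [MulAction G M] (R : CellSpace G M)
    (S : Set (G ⧸ R.G0)) (hS : S.Finite) (hsym : R.Symm S)
    (hgen : R.RightGenerates S)
    (hsub : Filter.Tendsto (fun k : ℕ => ((R.ball S R.m0 k).ncard : ℝ) ^ ((1 : ℝ) / k))
      Filter.atTop (nhds 1)) :
    ∀ ε : ℝ, 0 < ε → ∃ k : ℕ, (R.ball S R.m0 k).Nonempty ∧ (R.ball S R.m0 k).Finite ∧
      ∀ s ∈ S,
        ((R.ball S R.m0 k \ (fun m => R.rsa m s) ⁻¹' R.ball S R.m0 k).ncard : ℝ) /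
          ((R.ball S R.m0 k).ncard : ℝ) < ε := by
  intro ε hε
  have hfin := CellSpace.ball_finite hS hsym hgen
  have hne : ∀ k, (R.ball S R.m0 k).Nonempty := fun k => ⟨R.m0, CellSpace.mem_ball_self R.m0 k⟩
  obtain ⟨k, hk⟩ := exists_succ_lt_one_add_mul_of_tendsto_rpow_one
    ((Set.ncard_pos (hfin 0)).mpr (hne 0)) hsub hε
  refine ⟨k + 1, hne _, hfin _, fun s hs => ?_⟩
  exact Set.ncard_div_lt_of_subset_sdiff (hfin _) (CellSpace.ball_mono k.le_succ)
    (CellSpace.ball_sdiff_preimage_subset hsym hgen k hs) hk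

/-- If a finitely right generated cell space with finite stabiliser has
sub-exponential growth (`λ_S = 1`), then for every `ε > 0` some ball `F = B_S(k)`
satisfies `|F \ (· ⊲ s)⁻¹(F)| / |F| < ε` for every `s ∈ S`. -/
theorem stmt19 {G M : Type*} [Group G] [MulAction G M] (R : CellSpace G M)
    (S : Set (G ⧸ R.G0)) (hS : S.Finite) (hsat : R.Saturated S) (hsym : R.Symm S)
    (hgen : R.RightGenerates S) (hG0 : (R.G0 : Set G).Finite)
    (hsub : Filter.Tendsto (fun k : ℕ => ((R.ball S R.m0 k).ncard : ℝ) ^ ((1 : ℝ) / k))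
      Filter.atTop (nhds 1)) :
    ∀ ε : ℝ, 0 < ε → ∃ k : ℕ, (R.ball S R.m0 k).Nonempty ∧ (R.ball S R.m0 k).Finite ∧
      ∀ s ∈ S,
        ((R.ball S R.m0 k \ (fun m => R.rsa m s) ⁻¹' R.ball S R.m0 k).ncard : ℝ) /
          ((R.ball S R.m0 k).ncard : ℝ) < ε :=
  stmt19_general R S hS hsym hgen hsub
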